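/- Expected reward under the belief is the belief-MDP reward: for a finite POMDP, for any history h with positive probability and any action a, the conditional expectation of the immediate reward R(s_t, a) given the history h equals 𝔼_{s∼τ*(h)}[R(s,a)], where τ*(h) is the belief obtained by the recursive belief update along h. -/
import Mathlib


/-- One step of the unnormalized Bayes filter. -/
noncomputable def stepJoint {S A Ω : Type*} [Fintype S]
    (P : S → A → S → ℝ) (O : S → A → Ω → ℝ) (b : S → ℝ) (a : A) (o : Ω) : S → ℝ :=
  fun s' => (∑ s, b s * P s a s') * O s' a o

/-- Joint probability of a history together with the final hidden state. -/
noncomputable def jointFrom {S A Ω : Type*} [Fintype S]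
    (P : S → A → S → ℝ) (O : S → A → Ω → ℝ) : (S → ℝ) → List (A × Ω) → S → ℝ
  | b, [] => b
  | b, p :: rest => jointFrom P O (stepJoint P O b p.1 p.2) rest

/-- The normalized belief update `τ`. -/
noncomputable def beliefUpdate {S A Ω : Type*} [Fintype S]
    (P : S → A → S → ℝ) (O : S → A → Ω → ℝ) (b : S → ℝ) (a : A) (o : Ω) : S → ℝ :=
  fun s' => stepJoint P O b a o s' / ∑ t, stepJoint P O b a o t

/-- Recursive application of the belief update `τ` along a history. -/
noncomputable def beliefFrom {S A Ω : Type*} [Fintype S]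
    (P : S → A → S → ℝ) (O : S → A → Ω → ℝ) : (S → ℝ) → List (A × Ω) → S → ℝ
  | b, [] => b
  | b, p :: rest => beliefFrom P O (beliefUpdate P O b p.1 p.2) rest

lemma jointFrom_smul {S A Ω : Type*} [Fintype S]
    (P : S → A → S → ℝ) (O : S → A → Ω → ℝ) (c : ℝ) :
    ∀ (hist : List (A × Ω)) (b : S → ℝ) (s : S),
      jointFrom P O (fun t => c * b t) hist s = c * jointFrom P O b hist s := by
  intro hist
  induction hist with
  | nil => intro b s; rfl
  | cons p rest ih =>
    intro b s
    show jointFrom P O (stepJoint P O (fun t => c * b t) p.1 p.2) rest s = _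
    have hstep : stepJoint P O (fun t => c * b t) p.1 p.2 =
        fun s' => c * stepJoint P O b p.1 p.2 s' := by
      funext s'
      simp only [stepJoint, mul_assoc, ← Finset.mul_sum]
    rw [hstep, ih]
    rfl

lemma jointFrom_nonneg {S A Ω : Type*} [Fintype S]
    (P : S → A → S → ℝ) (O : S → A → Ω → ℝ)
    (hP0 : ∀ s a s', 0 ≤ P s a s') (hO0 : ∀ s' a o, 0 ≤ O s' a o) :
    ∀ (hist : List (A × Ω)) (b : S → ℝ), (∀ s, 0 ≤ b s) → ∀ s, 0 ≤ jointFrom P O b hist s := by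
  intro hist
  induction hist with
  | nil => intro b hb s; exact hb s
  | cons p rest ih =>
    intro b hb s
    refine ih _ (fun s' => ?_) s
    exact mul_nonneg (Finset.sum_nonneg fun t _ => mul_nonneg (hb t) (hP0 t p.1 s'))
      (hO0 s' p.1 p.2)

lemma beliefFrom_eq_jointFrom_div {S A Ω : Type*} [Fintype S]
    (P : S → A → S → ℝ) (O : S → A → Ω → ℝ)
    (hP0 : ∀ s a s', 0 ≤ P s a s') (hO0 : ∀ s' a o, 0 ≤ O s' a o) :
    ∀ (hist : List (A × Ω)) (b : S → ℝ), (∀ s, 0 ≤ b s) → (∑ s, b s = 1) →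
      0 < ∑ s, jointFrom P O b hist s →
      ∀ s, beliefFrom P O b hist s = jointFrom P O b hist s / ∑ t, jointFrom P O b hist t := by
  intro hist
  induction hist with
  | nil =>
    intro b hb hb1 hpos s
    show b s = b s / ∑ t, b t
    rw [hb1, div_one]
  | cons p rest ih =>
    intro b hb hb1 hpos s
    set c := ∑ t, stepJoint P O b p.1 p.2 t with hc
    have hstep0 : ∀ s', 0 ≤ stepJoint P O b p.1 p.2 s' := fun s' =>
      mul_nonneg (Finset.sum_nonneg fun t _ => mul_nonneg (hb t) (hP0 t p.1 s'))
        (hO0 s' p.1 p.2)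
    have hc0 : 0 ≤ c := Finset.sum_nonneg fun t _ => hstep0 t
    have hJ : ∀ s, jointFrom P O b (p :: rest) s = jointFrom P O (stepJoint P O b p.1 p.2) rest s :=
      fun s => rfl
    have hcne : c ≠ 0 := by
      intro h0
      have hz : ∀ t, stepJoint P O b p.1 p.2 t = 0 := by
        intro t
        exact (Finset.sum_eq_zero_iff_of_nonneg (fun u _ => hstep0 u)).mp h0 t (Finset.mem_univ t)
      have : ∑ s, jointFrom P O b (p :: rest) s = 0 := by
        have heq : stepJoint P O b p.1 p.2 = fun t => (0:ℝ) * stepJoint P O b p.1 p.2 t := by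
          funext t; rw [hz t]; ring
        calc ∑ s, jointFrom P O b (p :: rest) s
            = ∑ s, jointFrom P O (stepJoint P O b p.1 p.2) rest s := rfl
          _ = ∑ s, (0:ℝ) * jointFrom P O (stepJoint P O b p.1 p.2) rest s := by
              refine Finset.sum_congr rfl fun s _ => ?_
              conv_lhs => rw [heq]
              rw [jointFrom_smul]
          _ = 0 := by simp
      linarith [hpos, this]
    have hcpos : 0 < c := lt_of_le_of_ne hc0 (Ne.symm hcne)
    -- beliefUpdate = c⁻¹ • stepJoint
    have hbu : beliefUpdate P O b p.1 p.2 = fun t => c⁻¹ * stepJoint P O b p.1 p.2 t := by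
      funext t; simp [beliefUpdate, ← hc, div_eq_inv_mul]
    have hJb' : ∀ s, jointFrom P O (beliefUpdate P O b p.1 p.2) rest s =
        c⁻¹ * jointFrom P O (stepJoint P O b p.1 p.2) rest s := by
      intro s; rw [hbu, jointFrom_smul]
    have hsum' : ∑ s, jointFrom P O (beliefUpdate P O b p.1 p.2) rest s =
        c⁻¹ * ∑ s, jointFrom P O (stepJoint P O b p.1 p.2) rest s := by
      rw [Finset.mul_sum]; exact Finset.sum_congr rfl fun s _ => hJb' s
    have hpos' : 0 < ∑ s, jointFrom P O (beliefUpdate P O b p.1 p.2) rest s := by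
      rw [hsum']
      exact mul_pos (inv_pos.mpr hcpos) hpos
    have hbu0 : ∀ t, 0 ≤ beliefUpdate P O b p.1 p.2 t := by
      intro t; rw [hbu]; exact mul_nonneg (inv_nonneg.mpr hc0) (hstep0 t)
    have hbu1 : ∑ t, beliefUpdate P O b p.1 p.2 t = 1 := by
      simp only [hbu, ← Finset.mul_sum, ← hc]
      exact inv_mul_cancel₀ hcne
    have := ih (beliefUpdate P O b p.1 p.2) hbu0 hbu1 hpos' s
    show beliefFrom P O (beliefUpdate P O b p.1 p.2) rest s = _
    rw [this, hJb' s, hsum', mul_div_mul_left _ _ (inv_ne_zero hcne)]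
    rfl

/-- Expected reward given a positive-probability history equals the belief-MDP reward:
the conditional expectation of `R(s_T, a)` given the history `h` is `𝔼_{s ∼ τ*(h)} R(s,a)`. -/
theorem conditional_expected_reward_eq_belief_reward
    {S A Ω : Type*} [Fintype S] [Fintype Ω] [DecidableEq S]
    (P : S → A → S → ℝ) (O : S → A → Ω → ℝ) (R : S → A → ℝ)
    (hP0 : ∀ s a s', 0 ≤ P s a s') (hP1 : ∀ s a, ∑ s', P s a s' = 1)
    (hO0 : ∀ s' a o, 0 ≤ O s' a o) (hO1 : ∀ s' (a : A), ∑ o, O s' a o = 1)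
    (sI : S) (hist : List (A × Ω)) (a : A)
    (hpos : 0 < ∑ s, jointFrom P O (fun s => if s = sI then 1 else 0) hist s) :
    (∑ s, jointFrom P O (fun s => if s = sI then 1 else 0) hist s * R s a) /
        (∑ s, jointFrom P O (fun s => if s = sI then 1 else 0) hist s) =
      ∑ s, beliefFrom P O (fun s => if s = sI then 1 else 0) hist s * R s a := by
  have hb0 : ∀ s : S, 0 ≤ (if s = sI then (1:ℝ) else 0) := by
    intro s; split <;> norm_num
  have hb1 : ∑ s : S, (if s = sI then (1:ℝ) else 0) = 1 := by simp
  have hkey := beliefFrom_eq_jointFrom_div P O hP0 hO0 hist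
    (fun s => if s = sI then 1 else 0) hb0 hb1 hpos
  calc (∑ s, jointFrom P O (fun s => if s = sI then 1 else 0) hist s * R s a) /
        (∑ s, jointFrom P O (fun s => if s = sI then 1 else 0) hist s)
      = ∑ s, jointFrom P O (fun s => if s = sI then 1 else 0) hist s /
          (∑ t, jointFrom P O (fun s => if s = sI then 1 else 0) hist t) * R s a := by
        rw [Finset.sum_div]
        exact Finset.sum_congr rfl fun s _ => (div_mul_eq_mul_div _ _ _).symm
    _ = ∑ s, beliefFrom P O (fun s => if s = sI then 1 else 0) hist s * R s a := by
        exact Finset.sum_congr rfl fun s _ => by rw [hkey s]
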